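/- arXiv:1610.07398 — 5 statements merged into one kernel-verified Lean document; each statement's English description precedes it below -/
import Mathlib

section
/- Let (X, μ) be a measure space, let σ ⊆ X be a measurable set, and let φ₁, …, φ_n : X → ℝ be square-integrable on σ. Let M ∈ ℝ^{n×n} be the Gram matrix M_{jk} = ∫_σ φ_k φ_j dμ and assume det M ≠ 0. If ξ ∈ ℝ^n solves M ξ = e₁ (the first standard basis vector) and ψ = Σ_{k=1}^n ξ_k φ_k, then ψ satisfies ∫_σ ψ φ_j dμ = δ_{1j} for all j, and ∫_σ ψ² dμ = det(M^{11}) / det(M), where M^{11} denotes the (n−1)×(n−1) submatrix of M obtained by deleting the first row and the first column. -/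
/-!
Expanding `ψ = ∑ ξ_k φ_k` in the integrals expresses both conclusions through the Gram matrix
`M`: `∫_σ ψ φ_j = (M ξ)_j`, which is `δ_{1j}` by the choice of `ξ`, and
`∫_σ ψ² = ξ ⬝ M ξ = ξ_1`. Cramer's rule for `M ξ = e₁` gives `det M · ξ_1 = det M¹¹`.
-/

open MeasureTheory Matrix

namespace Matrix

theorem det_mul_apply_zero_of_mulVec_eq_single {n : ℕ} {R : Type*} [CommRing R]
    (A : Matrix (Fin (n + 1)) (Fin (n + 1)) R) {ξ : Fin (n + 1) → R}
    (h : A *ᵥ ξ = Pi.single 0 1) :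
    A.det * ξ 0 = (A.submatrix Fin.succ Fin.succ).det := by
  have hadj : A.det • ξ = A.adjugate *ᵥ Pi.single 0 1 := by
    rw [← h, mulVec_mulVec, adjugate_mul, smul_mulVec, one_mulVec]
  simpa [mulVec_single, adjugate_fin_succ_eq_det_submatrix, Fin.succAbove_zero] using
    congrFun hadj 0

end Matrix

namespace MeasureTheory

variable {X ι : Type*} [MeasurableSpace X] [Fintype ι]

noncomputable def gramMatrix (μ : Measure X) (φ : ι → X → ℝ) : Matrix ι ι ℝ :=
  Matrix.of fun j k => ∫ x, φ k x * φ j x ∂μ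

variable {μ : Measure X} {φ : ι → X → ℝ}

theorem integral_sum_mul_mul_eq_sum_mul_integral (hφ : ∀ k, MemLp (φ k) 2 μ) {g : X → ℝ}
    (hg : MemLp g 2 μ) (ξ : ι → ℝ) :
    ∫ x, (∑ k, ξ k * φ k x) * g x ∂μ = ∑ k, ξ k * ∫ x, φ k x * g x ∂μ := by
  simp_rw [Finset.sum_mul, mul_assoc]
  rw [integral_finsetSum]
  · simp_rw [integral_const_mul]
  · exact fun k _ => ((hφ k).integrable_mul hg).const_mul (ξ k)

theorem integral_sum_mul_eq_gramMatrix_mulVec (hφ : ∀ k, MemLp (φ k) 2 μ) (ξ : ι → ℝ) (j : ι) :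
    ∫ x, (∑ k, ξ k * φ k x) * φ j x ∂μ = (gramMatrix μ φ *ᵥ ξ) j := by
  rw [integral_sum_mul_mul_eq_sum_mul_integral hφ (hφ j), mulVec, dotProduct]
  simp only [gramMatrix, of_apply, mul_comm]

theorem integral_sum_sq_eq_dotProduct_gramMatrix_mulVec (hφ : ∀ k, MemLp (φ k) 2 μ)
    (ξ : ι → ℝ) :
    ∫ x, (∑ k, ξ k * φ k x) ^ 2 ∂μ = ξ ⬝ᵥ (gramMatrix μ φ *ᵥ ξ) := by
  have hψ : MemLp (fun x => ∑ k, ξ k * φ k x) 2 μ :=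
    memLp_finsetSum _ fun k _ => (hφ k).const_mul (ξ k)
  simp_rw [sq, integral_sum_mul_mul_eq_sum_mul_integral hφ hψ, dotProduct]
  refine Finset.sum_congr rfl fun k _ => ?_
  simp_rw [mul_comm (φ k _), integral_sum_mul_eq_gramMatrix_mulVec hφ]

end MeasureTheory

theorem dual_basis_sq_integral_eq_det_ratio_general
    {X : Type*} [MeasurableSpace X] (μ : Measure X)
    (σ : Set X)
    (n : ℕ) (φ : Fin (n + 1) → X → ℝ)
    (hφ : ∀ k, MemLp (φ k) 2 (μ.restrict σ))
    (M : Matrix (Fin (n + 1)) (Fin (n + 1)) ℝ)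
    (hM : ∀ j k, M j k = ∫ x in σ, φ k x * φ j x ∂μ)
    (hdet : M.det ≠ 0)
    (ξ : Fin (n + 1) → ℝ)
    (hξ : M.mulVec ξ = Pi.single 0 1)
    (ψ : X → ℝ)
    (hψ : ψ = fun x => ∑ k, ξ k * φ k x) :
    (∀ j, ∫ x in σ, ψ x * φ j x ∂μ = if j = 0 then 1 else 0) ∧
      ∫ x in σ, (ψ x) ^ 2 ∂μ =
        (M.submatrix Fin.succ Fin.succ).det / M.det := by
  have hG : M = gramMatrix (μ.restrict σ) φ := Matrix.ext hM
  subst hψ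
  refine ⟨fun j => ?_, ?_⟩
  · rw [integral_sum_mul_eq_gramMatrix_mulVec hφ, ← hG, hξ, Pi.single_apply]
  · rw [integral_sum_sq_eq_dotProduct_gramMatrix_mulVec hφ, ← hG, hξ, dotProduct_single,
      mul_one, eq_div_iff hdet, mul_comm, M.det_mul_apply_zero_of_mulVec_eq_single hξ]

/-- If `M` is the Gram matrix of square-integrable functions `φ_k` on `σ` with
`det M ≠ 0`, `ξ` solves `M ξ = e₁`, and `ψ = ∑ ξ_k φ_k`, then `ψ` satisfies the
duality conditions `∫_σ ψ φ_j dμ = δ_{1j}` and `∫_σ ψ² dμ = det(M¹¹)/det M`,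
where `M¹¹` deletes the first row and column of `M`. -/
theorem dual_basis_sq_integral_eq_det_ratio
    {X : Type*} [MeasurableSpace X] (μ : Measure X)
    (σ : Set X) (hσ : MeasurableSet σ)
    (n : ℕ) (φ : Fin (n + 1) → X → ℝ)
    (hφ : ∀ k, MemLp (φ k) 2 (μ.restrict σ))
    (M : Matrix (Fin (n + 1)) (Fin (n + 1)) ℝ)
    (hM : ∀ j k, M j k = ∫ x in σ, φ k x * φ j x ∂μ)
    (hdet : M.det ≠ 0)
    (ξ : Fin (n + 1) → ℝ)
    (hξ : M.mulVec ξ = Pi.single 0 1)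
    (ψ : X → ℝ)
    (hψ : ψ = fun x => ∑ k, ξ k * φ k x) :
    (∀ j, ∫ x in σ, ψ x * φ j x ∂μ = if j = 0 then 1 else 0) ∧
      ∫ x in σ, (ψ x) ^ 2 ∂μ =
        (M.submatrix Fin.succ Fin.succ).det / M.det :=
  dual_basis_sq_integral_eq_det_ratio_general μ σ n φ hφ M hM hdet ξ hξ ψ hψ
end

section
/- Let d ≥ 1, H > 0, z ∈ ℝ^d, and let B ∈ ℝ^{d×d} be an invertible matrix with det(B) = H^d. Define the affine map F(x̂) = B x̂ + z. Let σ ⊆ ℝ^d be a measurable set, let φ₁, …, φ_n : ℝ^d → ℝ be functions square-integrable on σ (with respect to Lebesgue measure), set φ̂_j = φ_j ∘ F and σ̂ = F^{-1}(σ), and let M̂ ∈ ℝ^{n×n} be the Gram matrix M̂_{jk} = ∫_{σ̂} φ̂_k φ̂_j dx̂, assumed invertible. If ψ is a function in the span of φ₁, …, φ_n satisfying ∫_σ ψ φ_j dx = δ_{1j} for all j = 1, …, n, then ‖ψ‖²_{L²(σ)} = H^{-d} κ², where κ² = det(M̂^{11}) / det(M̂) and M̂^{11} is the submatrix of M̂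 obtained by deleting the first row and first column. -/
/-!
Write `ψ = ∑ₖ cₖ φₖ`. With `G` the Gram matrix of the `φₖ` on `σ`, the duality conditions say
`G c = e₀`, hence `‖ψ‖² = c ⬝ G c = c₀`. The change of variables `x = F x̂` has Jacobian
`det B = H^d`, so `M̂ = H^{-d} G`, whence `c = H^{-d} M̂⁻¹ e₀` and `c₀ = H^{-d} (M̂⁻¹)₀₀`; by
Cramer's rule `(M̂⁻¹)₀₀ = det M̂¹¹ / det M̂`.
-/

open MeasureTheory Matrix

noncomputable def l2Gram {α ι : Type*} [MeasurableSpace α] (μ : Measure α) (φ : ι → α → ℝ) :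
    Matrix ι ι ℝ :=
  of fun j k => ∫ x, φ j x * φ k x ∂μ

section Gram

variable {α ι : Type*} [MeasurableSpace α] {μ : Measure α}

theorem l2Gram_comp {β : Type*} [MeasurableSpace β] {ν : Measure β} {F : α → β}
    (hF : MeasurableEmbedding F) {r : ℝ} (hr : 0 ≤ r) (hmap : μ.map F = ENNReal.ofReal r • ν)
    (φ : ι → β → ℝ) : l2Gram μ (fun j => φ j ∘ F) = r • l2Gram ν φ := by
  ext j k
  simp only [l2Gram, of_apply, Matrix.smul_apply, Function.comp_apply, smul_eq_mul]
  rw [← hF.integral_map (g := fun y => φ j y * φ k y), hmap, integral_smul_measure,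
    ENNReal.toReal_ofReal hr, smul_eq_mul]

variable [Fintype ι] {φ : ι → α → ℝ}

theorem l2Gram_mulVec (hφ : ∀ k, MemLp (φ k) 2 μ) (c : ι → ℝ) (j : ι) :
    (l2Gram μ φ *ᵥ c) j = ∫ x, φ j x * ∑ k, c k * φ k x ∂μ := by
  have hint (k : ι) : Integrable (fun x => φ j x * φ k x) μ := (hφ j).integrable_mul (hφ k)
  simp_rw [Finset.mul_sum, mul_left_comm (φ j _)]
  rw [integral_finsetSum _ fun k _ => (hint k).const_mul (c k)]
  simp only [mulVec, dotProduct, l2Gram, of_apply, integral_const_mul, mul_comm]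

theorem integral_sq_sum_eq_dotProduct_l2Gram (hφ : ∀ k, MemLp (φ k) 2 μ) (c : ι → ℝ) :
    ∫ x, (∑ k, c k * φ k x) ^ 2 ∂μ = c ⬝ᵥ (l2Gram μ φ *ᵥ c) := by
  have hsum : MemLp (fun x => ∑ k, c k * φ k x) 2 μ :=
    memLp_finsetSum Finset.univ fun k _ => (hφ k).const_mul (c k)
  simp_rw [dotProduct, l2Gram_mulVec hφ, ← integral_const_mul]
  have hint (j : ι) : Integrable (fun x => φ j x * ∑ k, c k * φ k x) μ :=
    (hφ j).integrable_mul hsum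
  rw [← integral_finsetSum _ fun j _ => (hint j).const_mul (c j)]
  congr 1; ext x; rw [sq, Finset.sum_mul]; exact Finset.sum_congr rfl fun j _ => by ring

end Gram

theorem Matrix.measurableEmbedding_mulVec_add {ι : Type*} [Fintype ι] [DecidableEq ι]
    {B : Matrix ι ι ℝ} (hB : B.det ≠ 0) (z : ι → ℝ) :
    MeasurableEmbedding fun x => B *ᵥ x + z := by
  let e := LinearMap.equivOfDetNeZero (toLin' B) (by rwa [LinearMap.det_toLin'])
  exact (e.toContinuousLinearEquiv.toHomeomorph.trans (Homeomorph.addRight z)).measurableEmbedding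

theorem Real.map_mulVec_add_volume_pi {ι : Type*} [Fintype ι] [DecidableEq ι]
    {B : Matrix ι ι ℝ} (hB : B.det ≠ 0) (z : ι → ℝ) :
    Measure.map (fun x => B *ᵥ x + z) volume = ENNReal.ofReal |B.det⁻¹| • volume := by
  have hcomp : (fun x => B *ᵥ x + z) = (· + z) ∘ toLin' B := by ext; simp
  rw [hcomp, ← Measure.map_map (measurable_add_const z)
      (toLin' B).continuous_of_finiteDimensional.measurable,
    Real.map_matrix_volume_pi_eq_smul_volume_pi hB, Measure.map_smul, map_add_right_eq_self]

theorem Matrix.inv_apply_zero_zero {K : Type*} [Field K] {n : ℕ}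
    (A : Matrix (Fin (n + 1)) (Fin (n + 1)) K) :
    A⁻¹ 0 0 = (A.submatrix Fin.succ Fin.succ).det / A.det := by
  rw [inv_def, smul_apply, adjugate_fin_succ_eq_det_submatrix, Ring.inverse_eq_inv', smul_eq_mul]
  simp [div_eq_inv_mul]

theorem dual_basis_L2_norm_scaling_general
    (d : ℕ) (H : ℝ) (hH : 0 < H)
    (z : Fin d → ℝ) (B : Matrix (Fin d) (Fin d) ℝ)
    (hB : B.det = H ^ d)
    (F : (Fin d → ℝ) → (Fin d → ℝ)) (hF : F = fun x => B.mulVec x + z)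
    (σ : Set (Fin d → ℝ))
    (n : ℕ) (φ : Fin (n + 1) → (Fin d → ℝ) → ℝ)
    (hφ : ∀ k, MemLp (φ k) 2 (volume.restrict σ))
    (φhat : Fin (n + 1) → (Fin d → ℝ) → ℝ) (hφhat : ∀ k, φhat k = φ k ∘ F)
    (σhat : Set (Fin d → ℝ)) (hσhat : σhat = F ⁻¹' σ)
    (Mhat : Matrix (Fin (n + 1)) (Fin (n + 1)) ℝ)
    (hMhat : ∀ j k, Mhat j k = ∫ x in σhat, φhat k x * φhat j x)
    (hMdet : Mhat.det ≠ 0)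
    (ψ : (Fin d → ℝ) → ℝ)
    (hψ : ψ ∈ Submodule.span ℝ (Set.range φ))
    (hdual : ∀ j, ∫ x in σ, ψ x * φ j x = if j = 0 then 1 else 0) :
    ∫ x in σ, (ψ x) ^ 2 =
      H ^ (-(d : ℤ)) * ((Mhat.submatrix Fin.succ Fin.succ).det / Mhat.det) := by
  have hHd : 0 < H ^ d := pow_pos hH d
  have hBdet : B.det ≠ 0 := hB ▸ hHd.ne'
  obtain ⟨c, rfl⟩ := (Submodule.mem_span_range_iff_exists_fun ℝ).mp hψ
  have hψc (x) : (∑ k, c k • φ k) x = ∑ k, c k * φ k x := by simp [Finset.sum_apply]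
  simp only [hψc] at hdual ⊢
  have hGram : l2Gram (volume.restrict σ) φ *ᵥ c = Pi.single 0 1 := by
    ext j
    rw [l2Gram_mulVec hφ, Pi.single_apply, ← hdual j]
    simp_rw [mul_comm]
  have hMhat_eq : Mhat = (H ^ d)⁻¹ • l2Gram (volume.restrict σ) φ := by
    have hFemb : MeasurableEmbedding F := hF ▸ measurableEmbedding_mulVec_add hBdet z
    have hmap : (volume.restrict σhat).map F = ENNReal.ofReal (H ^ d)⁻¹ • volume.restrict σ := by
      rw [hσhat, ← hFemb.restrict_map, hF, Real.map_mulVec_add_volume_pi hBdet, hB,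
        abs_of_pos (inv_pos.mpr hHd), Measure.restrict_smul]
    rw [← l2Gram_comp hFemb (inv_nonneg.mpr hHd.le) hmap]
    ext j k
    simp only [hMhat, hφhat, l2Gram, of_apply, mul_comm]
  have hc : c = Mhat⁻¹ *ᵥ ((H ^ d)⁻¹ • Pi.single 0 1) := by
    rw [← hGram, ← smul_mulVec, ← hMhat_eq, mulVec_mulVec, nonsing_inv_mul _ hMdet.isUnit,
      one_mulVec]
  rw [integral_sq_sum_eq_dotProduct_l2Gram hφ, hGram, dotProduct_single_one, hc, mulVec_smul,
    mulVec_single_one, Pi.smul_apply, col_apply, inv_apply_zero_zero, _root_.zpow_neg,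
    zpow_natCast, smul_eq_mul]

/-- Dual basis L²-norm: under an affine rescaling `F(x̂) = B x̂ + z` with
`det B = H^d`, the dual basis function `ψ` to `φ₁` on `σ` satisfies
`‖ψ‖²_{L²(σ)} = H^{-d} κ²` with `κ² = det(M̂¹¹)/det(M̂)`, where `M̂` is the
Gram matrix of the pulled-back functions `φ̂_j = φ_j ∘ F` on `σ̂ = F⁻¹(σ)`. -/
theorem dual_basis_L2_norm_scaling
    (d : ℕ) (hd : 1 ≤ d) (H : ℝ) (hH : 0 < H)
    (z : Fin d → ℝ) (B : Matrix (Fin d) (Fin d) ℝ)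
    (hB : B.det = H ^ d)
    (F : (Fin d → ℝ) → (Fin d → ℝ)) (hF : F = fun x => B.mulVec x + z)
    (σ : Set (Fin d → ℝ)) (hσ : MeasurableSet σ)
    (n : ℕ) (φ : Fin (n + 1) → (Fin d → ℝ) → ℝ)
    (hφ : ∀ k, MemLp (φ k) 2 (volume.restrict σ))
    (φhat : Fin (n + 1) → (Fin d → ℝ) → ℝ) (hφhat : ∀ k, φhat k = φ k ∘ F)
    (σhat : Set (Fin d → ℝ)) (hσhat : σhat = F ⁻¹' σ)
    (Mhat : Matrix (Fin (n + 1)) (Fin (n + 1)) ℝ)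
    (hMhat : ∀ j k, Mhat j k = ∫ x in σhat, φhat k x * φhat j x)
    (hMdet : Mhat.det ≠ 0)
    (ψ : (Fin d → ℝ) → ℝ)
    (hψ : ψ ∈ Submodule.span ℝ (Set.range φ))
    (hdual : ∀ j, ∫ x in σ, ψ x * φ j x = if j = 0 then 1 else 0) :
    ∫ x in σ, (ψ x) ^ 2 =
      H ^ (-(d : ℤ)) * ((Mhat.submatrix Fin.succ Fin.succ).det / Mhat.det) :=
  dual_basis_L2_norm_scaling_general d H hH z B hB F hF σ n φ hφ φhat hφhat σhat hσhat Mhat hMhat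
    hMdet ψ hψ hdual
end

section
/- Let (X, μ) be a measure space, let σ ⊆ σ̃ ⊆ X be measurable sets, and let φ₁, …, φ_n : X → ℝ be square-integrable on σ̃. Suppose ψ = Σ_{k=1}^n ξ_k φ_k satisfies ∫_σ ψ φ_j dμ = δ_{1j} for all j = 1, …, n, and ψ̃ = Σ_{k=1}^n ξ̃_k φ_k satisfies ∫_{σ̃} ψ̃ φ_j dμ = δ_{1j} for all j = 1, …, n. Then ‖ψ̃‖_{L²(σ̃)} ≤ ‖ψ‖_{L²(σ)}, i.e., (∫_{σ̃} ψ̃² dμ)^{1/2} ≤ (∫_σ ψ² dμ)^{1/2}. -/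
/-!
Testing both duality conditions against `ψ̃` gives `∫_σ̃ ψ̃² = ξ̃₁ = ∫_σ ψ ψ̃`. Hence
`2 ∫_σ̃ ψ̃² = 2 ∫_σ ψ ψ̃ ≤ ∫_σ ψ² + ∫_σ ψ̃² ≤ ∫_σ ψ² + ∫_σ̃ ψ̃²`.
-/

open MeasureTheory

theorem integral_mul_sum_eq_of_dual {X ι : Type*} [MeasurableSpace X] [Fintype ι]
    [DecidableEq ι] {ν : Measure X} {φ : ι → X → ℝ} {g : X → ℝ} {i₀ : ι}
    (hint : ∀ j, Integrable (fun x => g x * φ j x) ν)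
    (hdual : ∀ j, ∫ x, g x * φ j x ∂ν = if j = i₀ then 1 else 0) (ξ : ι → ℝ) :
    ∫ x, g x * ∑ k, ξ k * φ k x ∂ν = ξ i₀ := by
  simp_rw [Finset.mul_sum, mul_left_comm (g _)]
  rw [integral_finsetSum _ fun k _ => (hint k).const_mul (ξ k)]
  simp [integral_const_mul, hdual]

theorem two_mul_integral_mul_le_integral_sq_add_integral_sq {X : Type*} [MeasurableSpace X]
    {ν : Measure X} {f g : X → ℝ} (hf : MemLp f 2 ν) (hg : MemLp g 2 ν) :
    2 * ∫ x, f x * g x ∂ν ≤ ∫ x, f x ^ 2 ∂ν + ∫ x, g x ^ 2 ∂ν := by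
  rw [← integral_const_mul, ← integral_add hf.integrable_sq hg.integrable_sq]
  refine integral_mono ?_ (hf.integrable_sq.add hg.integrable_sq) fun x => ?_
  · exact (hf.integrable_mul hg).const_mul 2
  · simpa only [mul_assoc] using two_mul_le_add_sq (f x) (g x)

theorem extend_integration_domain_le_general
    {X : Type*} [MeasurableSpace X] (μ : Measure X)
    (σ σt : Set X)
    (hsub : σ ⊆ σt)
    (n : ℕ) (φ : Fin (n + 1) → X → ℝ)
    (hφ : ∀ k, MemLp (φ k) 2 (μ.restrict σt))
    (ξ ξt : Fin (n + 1) → ℝ) (ψ ψt : X → ℝ)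
    (hψ : ψ = fun x => ∑ k, ξ k * φ k x)
    (hψt : ψt = fun x => ∑ k, ξt k * φ k x)
    (hdual : ∀ j, ∫ x in σ, ψ x * φ j x ∂μ = if j = 0 then 1 else 0)
    (hdualt : ∀ j, ∫ x in σt, ψt x * φ j x ∂μ = if j = 0 then 1 else 0) :
    Real.sqrt (∫ x in σt, (ψt x) ^ 2 ∂μ) ≤ Real.sqrt (∫ x in σ, (ψ x) ^ 2 ∂μ) := by
  have hle : μ.restrict σ ≤ μ.restrict σt := Measure.restrict_mono hsub le_rfl
  have hφσ k : MemLp (φ k) 2 (μ.restrict σ) := (hφ k).mono_measure hle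
  have hψ_mem : MemLp ψ 2 (μ.restrict σ) :=
    hψ ▸ memLp_finsetSum _ fun k _ => (hφσ k).const_mul (ξ k)
  have hψt_mem : MemLp ψt 2 (μ.restrict σt) :=
    hψt ▸ memLp_finsetSum _ fun k _ => (hφ k).const_mul (ξt k)
  have hψt_apply x : ψt x = ∑ k, ξt k * φ k x := congrFun hψt x
  have hnorm : ∫ x in σt, ψt x ^ 2 ∂μ = ξt 0 := by
    have h := integral_mul_sum_eq_of_dual (fun j => hψt_mem.integrable_mul (hφ j)) hdualt ξt
    simpa only [sq, ← hψt_apply] using h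
  have hcross : ∫ x in σ, ψ x * ψt x ∂μ = ξt 0 := by
    have h := integral_mul_sum_eq_of_dual (fun j => hψ_mem.integrable_mul (hφσ j)) hdual ξt
    simpa only [← hψt_apply] using h
  have hmono : ∫ x in σ, ψt x ^ 2 ∂μ ≤ ∫ x in σt, ψt x ^ 2 ∂μ :=
    setIntegral_mono_set hψt_mem.integrable_sq (.of_forall fun x => sq_nonneg _) hsub.eventuallyLE
  have hamgm :=
    two_mul_integral_mul_le_integral_sq_add_integral_sq hψ_mem (hψt_mem.mono_measure hle)
  exact Real.sqrt_le_sqrt (by linarith)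

/-- Extending the integration domain never increases the dual basis L²-norm:
if `ψ` is dual to `φ₁` on `σ` and `ψ̃` is dual to `φ₁` on `σ̃ ⊇ σ`, then
`‖ψ̃‖_{L²(σ̃)} ≤ ‖ψ‖_{L²(σ)}`. -/
theorem extend_integration_domain_le
    {X : Type*} [MeasurableSpace X] (μ : Measure X)
    (σ σt : Set X) (hσ : MeasurableSet σ) (hσt : MeasurableSet σt)
    (hsub : σ ⊆ σt)
    (n : ℕ) (φ : Fin (n + 1) → X → ℝ)
    (hφ : ∀ k, MemLp (φ k) 2 (μ.restrict σt))
    (ξ ξt : Fin (n + 1) → ℝ) (ψ ψt : X → ℝ)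
    (hψ : ψ = fun x => ∑ k, ξ k * φ k x)
    (hψt : ψt = fun x => ∑ k, ξt k * φ k x)
    (hdual : ∀ j, ∫ x in σ, ψ x * φ j x ∂μ = if j = 0 then 1 else 0)
    (hdualt : ∀ j, ∫ x in σt, ψt x * φ j x ∂μ = if j = 0 then 1 else 0) :
    Real.sqrt (∫ x in σt, (ψt x) ^ 2 ∂μ) ≤ Real.sqrt (∫ x in σ, (ψ x) ^ 2 ∂μ) :=
  extend_integration_domain_le_general μ σ σt hsub n φ hφ ξ ξt ψ ψt hψ hψt hdual hdualt
end

section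
/- Let (X, μ) be a measure space, let σ ⊆ σ̃ ⊆ X be measurable sets, and let φ₁, …, φ_n : X → ℝ be square-integrable on σ̃. Suppose ψ = Σ_{k=1}^n ξ_k φ_k satisfies ∫_σ ψ φ_j dμ = δ_{1j} for all j = 1, …, n, and ψ̃ = Σ_{k=1}^n ξ̃_k φ_k satisfies ∫_{σ̃} ψ̃ φ_j dμ = δ_{1j} for all j = 1, …, n. Then ∫_σ ψ̃ ψ dμ = ξ̃₁ = ∫_{σ̃} ψ̃² dμ. -/
open MeasureTheory

section DualFunction

variable {X ι : Type*} [MeasurableSpace X] {μ : Measure X} [Fintype ι]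

theorem memLp_sum_const_mul {p : ENNReal} {φ : ι → X → ℝ} (hφ : ∀ k, MemLp (φ k) p μ)
    (ξ : ι → ℝ) : MemLp (fun x => ∑ k, ξ k * φ k x) p μ :=
  memLp_finsetSum _ fun k _ => (hφ k).const_mul (ξ k)

theorem integral_mul_sum_mul {f : X → ℝ} {φ : ι → X → ℝ}
    (hint : ∀ k, Integrable (fun x => f x * φ k x) μ) (ξ : ι → ℝ) :
    ∫ x, f x * ∑ k, ξ k * φ k x ∂μ = ∑ k, ξ k * ∫ x, f x * φ k x ∂μ := by
  calc ∫ x, f x * ∑ k, ξ k * φ k x ∂μ = ∫ x, ∑ k, ξ k * (f x * φ k x) ∂μ := by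
        congr 1; ext x; rw [Finset.mul_sum]; congr 1; ext k; ring
    _ = ∑ k, ξ k * ∫ x, f x * φ k x ∂μ := by
        rw [integral_finsetSum _ fun k _ => (hint k).const_mul (ξ k)]
        simp only [integral_const_mul]

theorem integral_mul_sum_mul_of_dual [DecidableEq ι] {f : X → ℝ} {φ : ι → X → ℝ}
    (hf : MemLp f 2 μ) (hφ : ∀ k, MemLp (φ k) 2 μ) {i : ι}
    (hdual : ∀ j, ∫ x, f x * φ j x ∂μ = if j = i then 1 else 0) (ξ : ι → ℝ) :
    ∫ x, f x * ∑ k, ξ k * φ k x ∂μ = ξ i := by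
  rw [integral_mul_sum_mul (fun k => hf.integrable_mul (hφ k)) ξ]
  simp [hdual]

end DualFunction

theorem extend_integration_domain_key_identity_general
    {X : Type*} [MeasurableSpace X] (μ : Measure X)
    (σ σt : Set X)
    (hsub : σ ⊆ σt)
    (n : ℕ) (φ : Fin (n + 1) → X → ℝ)
    (hφ : ∀ k, MemLp (φ k) 2 (μ.restrict σt))
    (ξ ξt : Fin (n + 1) → ℝ) (ψ ψt : X → ℝ)
    (hψ : ψ = fun x => ∑ k, ξ k * φ k x)
    (hψt : ψt = fun x => ∑ k, ξt k * φ k x)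
    (hdual : ∀ j, ∫ x in σ, ψ x * φ j x ∂μ = if j = 0 then 1 else 0)
    (hdualt : ∀ j, ∫ x in σt, ψt x * φ j x ∂μ = if j = 0 then 1 else 0) :
    (∫ x in σ, ψt x * ψ x ∂μ) = ξt 0 ∧ ξt 0 = ∫ x in σt, (ψt x) ^ 2 ∂μ := by
  have hφσ : ∀ k, MemLp (φ k) 2 (μ.restrict σ) :=
    fun k => (hφ k).mono_measure (Measure.restrict_mono hsub le_rfl)
  have hψ2 : MemLp ψ 2 (μ.restrict σ) := hψ ▸ memLp_sum_const_mul hφσ ξ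
  have hψt2 : MemLp ψt 2 (μ.restrict σt) := hψt ▸ memLp_sum_const_mul hφ ξt
  constructor
  · calc ∫ x in σ, ψt x * ψ x ∂μ = ∫ x in σ, ψ x * ∑ k, ξt k * φ k x ∂μ := by
          simp_rw [hψt, mul_comm]
      _ = ξt 0 := integral_mul_sum_mul_of_dual hψ2 hφσ hdual ξt
  · calc ξt 0 = ∫ x in σt, ψt x * ∑ k, ξt k * φ k x ∂μ :=
          (integral_mul_sum_mul_of_dual hψt2 hφ hdualt ξt).symm
      _ = ∫ x in σt, ψt x ^ 2 ∂μ := by simp_rw [sq, hψt]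

/-- Key identity in the proof of the extension lemma: if `ψ` is dual to `φ₁`
on `σ` and `ψ̃` is dual to `φ₁` on `σ̃ ⊇ σ`, then
`∫_σ ψ̃ ψ dμ = ξ̃₁ = ∫_{σ̃} ψ̃² dμ`. -/
theorem extend_integration_domain_key_identity
    {X : Type*} [MeasurableSpace X] (μ : Measure X)
    (σ σt : Set X) (hσ : MeasurableSet σ) (hσt : MeasurableSet σt)
    (hsub : σ ⊆ σt)
    (n : ℕ) (φ : Fin (n + 1) → X → ℝ)
    (hφ : ∀ k, MemLp (φ k) 2 (μ.restrict σt))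
    (ξ ξt : Fin (n + 1) → ℝ) (ψ ψt : X → ℝ)
    (hψ : ψ = fun x => ∑ k, ξ k * φ k x)
    (hψt : ψt = fun x => ∑ k, ξt k * φ k x)
    (hdual : ∀ j, ∫ x in σ, ψ x * φ j x ∂μ = if j = 0 then 1 else 0)
    (hdualt : ∀ j, ∫ x in σt, ψt x * φ j x ∂μ = if j = 0 then 1 else 0) :
    (∫ x in σ, ψt x * ψ x ∂μ) = ξt 0 ∧ ξt 0 = ∫ x in σt, (ψt x) ^ 2 ∂μ :=
  extend_integration_domain_key_identity_general μ σ σt hsub n φ hφ ξ ξt ψ ψt hψ hψt hdual hdualt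
end

section
/- Let T = {(x, y) ∈ ℝ² : x ≥ 0, y ≥ 0, x + y ≤ 1} be the reference triangle with barycentric coordinate functions λ₁(x, y) = 1 − x − y, λ₂(x, y) = x, λ₃(x, y) = y, and for 0 < ε ≤ 1 let σ_ε = {(x, y) ∈ ℝ² : x ≥ 0, y ≥ 0, x + y ≤ ε} be the ε-scaled corner triangle. Then any function ψ in the span of λ₁, λ₂, λ₃ satisfying ∫_{σ_ε} ψ λ_j dx dy = δ_{1j} for j = 1, 2, 3 has ∫_{σ_ε} ψ² dx dy = 18 ε^{-2}. -/
/-!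
Write `ψ = ∑ cᵢ λᵢ`. Duality gives `∫ ψ² = ∑ cᵢ ∫ ψ λᵢ = c₀`, so only the coefficient `c₀` is
needed. The duality conditions form a linear system whose entries are the moments of order at
most two of the corner triangle, obtained by iterated integration; solving it gives
`c₀ = 18 / ε²`.
-/

open MeasureTheory Set

theorem integral_sq_eq_coeff_of_dual {α ι : Type*} [MeasurableSpace α] [Fintype ι]
    [DecidableEq ι] {μ : Measure α} {φ : ι → α → ℝ} {c : ι → ℝ} {ψ : α → ℝ}
    (hψ : ∑ j, c j • φ j = ψ) (hint : ∀ j, Integrable (fun x => ψ x * φ j x) μ) {i : ι}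
    (hdual : ∀ j, ∫ x, ψ x * φ j x ∂μ = if j = i then 1 else 0) :
    ∫ x, ψ x ^ 2 ∂μ = c i := by
  calc ∫ x, ψ x ^ 2 ∂μ = ∫ x, ∑ j, c j * (ψ x * φ j x) ∂μ := by
        congr 1 with x
        rw [sq]
        nth_rw 2 [← hψ]
        simp only [Finset.sum_apply, Pi.smul_apply, smul_eq_mul, Finset.mul_sum, mul_left_comm]
    _ = ∑ j, c j * ∫ x, ψ x * φ j x ∂μ := by
        rw [integral_finsetSum _ fun j _ => (hint j).const_mul (c j)]
        simp only [integral_const_mul]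
    _ = c i := by simp [hdual]

def cornerTriangle (ε : ℝ) : Set (ℝ × ℝ) := {p | 0 ≤ p.1 ∧ 0 ≤ p.2 ∧ p.1 + p.2 ≤ ε}

theorem isClosed_cornerTriangle (ε : ℝ) : IsClosed (cornerTriangle ε) :=
  (isClosed_le continuous_const continuous_fst).inter
    ((isClosed_le continuous_const continuous_snd).inter
      (isClosed_le (continuous_fst.add continuous_snd) continuous_const))

theorem isCompact_cornerTriangle (ε : ℝ) : IsCompact (cornerTriangle ε) :=
  (isCompact_Icc.prod isCompact_Icc).of_isClosed_subset (isClosed_cornerTriangle ε)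
    fun _ ⟨h₁, h₂, h₃⟩ => ⟨⟨h₁, by linarith⟩, ⟨h₂, by linarith⟩⟩

theorem cornerTriangle_subset_prod (ε : ℝ) : cornerTriangle ε ⊆ Icc 0 ε ×ˢ univ :=
  fun _ ⟨h₁, h₂, h₃⟩ => ⟨⟨h₁, by linarith⟩, trivial⟩

theorem preimage_mk_cornerTriangle {ε x : ℝ} (hx : 0 ≤ x) :
    Prod.mk x ⁻¹' cornerTriangle ε = Icc 0 (ε - x) := by
  ext y
  exact ⟨fun ⟨_, h₂, h₃⟩ => ⟨h₂, by simp only at h₃; linarith⟩,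
    fun ⟨h₂, h₃⟩ => ⟨hx, h₂, by simp only; linarith⟩⟩

theorem setIntegral_cornerTriangle {ε : ℝ} (hε : 0 ≤ ε) {f : ℝ × ℝ → ℝ} (hf : Continuous f) :
    ∫ p in cornerTriangle ε, f p = ∫ x in 0..ε, ∫ y in 0..ε - x, f (x, y) := by
  have hS := (isClosed_cornerTriangle ε).measurableSet
  have hint : IntegrableOn ((cornerTriangle ε).indicator f) (Icc 0 ε ×ˢ univ) :=
    ((integrable_indicator_iff hS).2
      (hf.continuousOn.integrableOn_compact (isCompact_cornerTriangle ε))).integrableOn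
  rw [← inter_eq_right.2 (cornerTriangle_subset_prod ε), ← setIntegral_indicator hS,
    Measure.volume_eq_prod, setIntegral_prod _ hint, intervalIntegral.integral_of_le hε,
    ← integral_Icc_eq_integral_Ioc]
  refine setIntegral_congr_fun measurableSet_Icc fun x hx => ?_
  rw [Measure.restrict_univ, intervalIntegral.integral_of_le (sub_nonneg.2 hx.2),
    ← integral_Icc_eq_integral_Ioc, ← preimage_mk_cornerTriangle hx.1,
    ← integral_indicator (measurable_prodMk_left hS)]
  rfl

theorem integral_cornerTriangle_affine_mul_affine {ε : ℝ} (hε : 0 ≤ ε) (a b c a' b' c' : ℝ) :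
    ∫ p in cornerTriangle ε, (a + b * p.1 + c * p.2) * (a' + b' * p.1 + c' * p.2) =
      a * a' * ε ^ 2 / 2 + (a * b' + b * a' + a * c' + c * a') * ε ^ 3 / 6 +
        (b * b' + c * c') * ε ^ 4 / 12 + (b * c' + c * b') * ε ^ 4 / 24 := by
  rw [setIntegral_cornerTriangle hε (by fun_prop)]
  -- `ring_nf` leaves eta-reduced integrands `Neg.neg`, `(r * ·)`: hence the instances at
  -- `fun x => x`.
  iterate 2
    ring_nf
    simp (disch := (apply Continuous.intervalIntegrable; fun_prop)) only
      [intervalIntegral.integral_add, intervalIntegral.integral_sub, intervalIntegral.integral_neg,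
        intervalIntegral.integral_neg (f := fun x => x), intervalIntegral.integral_const_mul,
        intervalIntegral.integral_const_mul (f := fun x => x), intervalIntegral.integral_mul_const,
        integral_pow, integral_id, intervalIntegral.integral_const, smul_eq_mul]
  ring

def refBarycentric : Fin 3 → ℝ × ℝ → ℝ := ![fun p => 1 - p.1 - p.2, fun p => p.1, fun p => p.2]

theorem sum_smul_refBarycentric_apply (c : Fin 3 → ℝ) (p : ℝ × ℝ) :
    (∑ i, c i • refBarycentric i) p = c 0 + (c 1 - c 0) * p.1 + (c 2 - c 0) * p.2 := by
  simp [Fin.sum_univ_three, refBarycentric]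
  ring

theorem continuous_refBarycentric (j : Fin 3) : Continuous (refBarycentric j) := by
  fin_cases j <;> simp [refBarycentric] <;> fun_prop

theorem continuous_sum_smul_refBarycentric (c : Fin 3 → ℝ) :
    Continuous (∑ i, c i • refBarycentric i) := by
  rw [funext (sum_smul_refBarycentric_apply c)]
  fun_prop

theorem coeff_zero_of_dual_refBarycentric {ε : ℝ} (hε : 0 < ε) {c : Fin 3 → ℝ}
    (hdual : ∀ j, ∫ p in cornerTriangle ε, (∑ i, c i • refBarycentric i) p * refBarycentric j p =
      if j = 0 then 1 else 0) :
    c 0 = 18 / ε ^ 2 := by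
  have hbary₀ (p : ℝ × ℝ) : refBarycentric 0 p = 1 + -1 * p.1 + -1 * p.2 := by
    simp [refBarycentric]; ring
  have hbary₁ (p : ℝ × ℝ) : refBarycentric 1 p = 0 + 1 * p.1 + 0 * p.2 := by simp [refBarycentric]
  have hbary₂ (p : ℝ × ℝ) : refBarycentric 2 p = 0 + 0 * p.1 + 1 * p.2 := by simp [refBarycentric]
  have h₀ := hdual 0
  have h₁ := hdual 1
  have h₂ := hdual 2
  rw [if_pos rfl] at h₀
  rw [if_neg (by decide)] at h₁ h₂
  simp only [sum_smul_refBarycentric_apply, hbary₀, hbary₁, hbary₂,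
    integral_cornerTriangle_affine_mul_affine hε.le] at h₀ h₁ h₂
  -- `h₀` and `h₁ + h₂` see `c 1`, `c 2` only through `c 1 + c 2`, by the `x ↔ y` symmetry.
  have key : ε ^ 4 * (c 0 * ε ^ 2) = ε ^ 4 * 18 := by
    linear_combination (18 * ε ^ 4) * h₀ + (18 * ε ^ 4 - 24 * ε ^ 3) * (h₁ + h₂)
  rw [eq_div_iff (by positivity)]
  exact mul_left_cancel₀ (by positivity) key

theorem scaled_corner_triangle_dual_basis_general
    (ε : ℝ) (hε0 : 0 < ε)
    (lam : Fin 3 → ℝ × ℝ → ℝ)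
    (hlam : lam = ![fun p => 1 - p.1 - p.2, fun p => p.1, fun p => p.2])
    (σε : Set (ℝ × ℝ))
    (hσε : σε = {p : ℝ × ℝ | 0 ≤ p.1 ∧ 0 ≤ p.2 ∧ p.1 + p.2 ≤ ε})
    (ψ : ℝ × ℝ → ℝ) (hψ : ψ ∈ Submodule.span ℝ (Set.range lam))
    (hdual : ∀ j, ∫ p in σε, ψ p * lam j p = if j = 0 then 1 else 0) :
    ∫ p in σε, (ψ p) ^ 2 = 18 / ε ^ 2 := by
  obtain ⟨c, rfl⟩ := (Submodule.mem_span_range_iff_exists_fun ℝ).mp hψ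
  obtain rfl : σε = cornerTriangle ε := hσε
  obtain rfl : lam = refBarycentric := hlam
  have hint (j : Fin 3) :
      IntegrableOn (fun p => (∑ i, c i • refBarycentric i) p * refBarycentric j p)
        (cornerTriangle ε) :=
    ((continuous_sum_smul_refBarycentric c).mul (continuous_refBarycentric j)).continuousOn
      |>.integrableOn_compact (isCompact_cornerTriangle ε)
  rw [integral_sq_eq_coeff_of_dual rfl hint hdual]
  exact coeff_zero_of_dual_refBarycentric hε0 hdual

/-- For the ε-scaled corner triangle `σ_ε` inside the reference triangle,
any dual function `ψ` to `λ₁` (with respect to the barycentric coordinates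
`λ₁, λ₂, λ₃` of the reference triangle) on `σ_ε` satisfies
`∫_{σ_ε} ψ² = 18 ε⁻²`. -/
theorem scaled_corner_triangle_dual_basis
    (ε : ℝ) (hε0 : 0 < ε) (hε1 : ε ≤ 1)
    (lam : Fin 3 → ℝ × ℝ → ℝ)
    (hlam : lam = ![fun p => 1 - p.1 - p.2, fun p => p.1, fun p => p.2])
    (σε : Set (ℝ × ℝ))
    (hσε : σε = {p : ℝ × ℝ | 0 ≤ p.1 ∧ 0 ≤ p.2 ∧ p.1 + p.2 ≤ ε})
    (ψ : ℝ × ℝ → ℝ) (hψ : ψ ∈ Submodule.span ℝ (Set.range lam))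
    (hdual : ∀ j, ∫ p in σε, ψ p * lam j p = if j = 0 then 1 else 0) :
    ∫ p in σε, (ψ p) ^ 2 = 18 / ε ^ 2 :=
  scaled_corner_triangle_dual_basis_general ε hε0 lam hlam σε hσε ψ hψ hdual
end
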